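/- arXiv:2111.01249 — 2 statements merged into one kernel-verified Lean document; each statement's English description precedes it below -/
import Mathlib

section
/- Aggregated balance constraints are implied by the nodal balances: if an allocation (s,d,f,ξ,y) satisfies the nodal balance constraint for every node n and product p, then for every partition c₀ ∈ 𝒞 and product p ∈ 𝒫 the aggregated balance holds: Σ_{i : c(n(i))=c₀, p(i)=p} sᵢ + Σ_{k : c_r(k)=c₀, p(k)=p} f̂_k − Σ_{j : c(n(j))=c₀, p(j)=p} dⱼ − Σ_{k : c_s(k)=c₀, p(k)=p} f̂_k + Σ_{t : c(n(t))=c₀} γ_{t,p}·ξ_t = 0, where f̂_k = Σ_{ℓ ∈ class k} f_ℓ. -/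
open Finset

/-- A multi-product supply chain model with nodes `N`, products `P`,
suppliers `S`, consumers `D`, transport edges `L`, and technologies `T`. -/
structure SupplyChain (N P S D L T : Type) where
  /-- node of supplier `i` -/
  nS : S → N
  /-- product of supplier `i` -/
  pS : S → P
  /-- supply capacity `s̄ᵢ` -/
  sBar : S → ℝ
  /-- supply cost `αˢᵢ` -/
  alphaS : S → ℝ
  /-- node of consumer `j` -/
  nD : D → N
  /-- product of consumer `j` -/
  pD : D → P
  /-- demand capacity `d̄ⱼ` -/
  dBar : D → ℝ
  /-- demand price `α^d_j` -/
  alphaD : D → ℝ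
  /-- sending node `n_s(ℓ)` -/
  nsend : L → N
  /-- receiving node `n_r(ℓ)` -/
  nrecv : L → N
  /-- product transported `p(ℓ)` -/
  pL : L → P
  /-- flow capacity `f̄_ℓ` -/
  fBar : L → ℝ
  /-- transport cost `α^f_ℓ` -/
  alphaF : L → ℝ
  /-- node of technology `t` -/
  nT : T → N
  /-- yield factors `γ_{t,p}` -/
  gamma : T → P → ℝ
  /-- per-facility processing capacity `ξ̄_t` -/
  xiBar : T → ℝ
  /-- maximum number of facilities `ȳ_t` -/
  yBar : T → ℕ
  /-- operating cost `α^ξ_t` -/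
  alphaXi : T → ℝ
  /-- installation cost `α^y_t` -/
  alphaY : T → ℝ
  sBar_nonneg : ∀ i, 0 ≤ sBar i
  alphaS_nonneg : ∀ i, 0 ≤ alphaS i
  dBar_nonneg : ∀ j, 0 ≤ dBar j
  alphaD_nonneg : ∀ j, 0 ≤ alphaD j
  fBar_nonneg : ∀ l, 0 ≤ fBar l
  alphaF_nonneg : ∀ l, 0 ≤ alphaF l
  xiBar_nonneg : ∀ t, 0 ≤ xiBar t
  alphaXi_nonneg : ∀ t, 0 ≤ alphaXi t
  alphaY_nonneg : ∀ t, 0 ≤ alphaY t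

/-- An allocation `x = (s, d, f, ξ, y)`. -/
abbrev Alloc (S D L T : Type) : Type :=
  (S → ℝ) × (D → ℝ) × (L → ℝ) × (T → ℝ) × (T → ℤ)

variable {N P S D L T : Type} [Fintype N] [Fintype P] [Fintype S] [Fintype D]
  [Fintype L] [Fintype T] [DecidableEq N] [DecidableEq P]

/-- The feasible set `𝓕` of the supply chain model. -/
def Feasible (sc : SupplyChain N P S D L T) : Set (Alloc S D L T) :=
  { x | (∀ (n : N) (p : P),
        (∑ i ∈ univ.filter (fun i => sc.nS i = n ∧ sc.pS i = p), x.1 i)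
        + (∑ l ∈ univ.filter (fun l => sc.nrecv l = n ∧ sc.pL l = p), x.2.2.1 l)
        - (∑ j ∈ univ.filter (fun j => sc.nD j = n ∧ sc.pD j = p), x.2.1 j)
        - (∑ l ∈ univ.filter (fun l => sc.nsend l = n ∧ sc.pL l = p), x.2.2.1 l)
        + (∑ t ∈ univ.filter (fun t => sc.nT t = n), sc.gamma t p * x.2.2.2.1 t) = 0)
      ∧ (∀ j, 0 ≤ x.2.1 j ∧ x.2.1 j ≤ sc.dBar j)
      ∧ (∀ i, 0 ≤ x.1 i ∧ x.1 i ≤ sc.sBar i)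
      ∧ (∀ l, 0 ≤ x.2.2.1 l ∧ x.2.2.1 l ≤ sc.fBar l)
      ∧ (∀ t, 0 ≤ x.2.2.2.2 t ∧ x.2.2.2.2 t ≤ (sc.yBar t : ℤ))
      ∧ (∀ t, 0 ≤ x.2.2.2.1 t ∧ x.2.2.2.1 t ≤ (x.2.2.2.2 t : ℝ) * sc.xiBar t) }

/-- The total welfare `φ(x)`. -/
def welfare (sc : SupplyChain N P S D L T) (x : Alloc S D L T) : ℝ :=
  (∑ j, sc.alphaD j * x.2.1 j) - (∑ i, sc.alphaS i * x.1 i)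
    - (∑ l, sc.alphaF l * x.2.2.1 l) - (∑ t, sc.alphaXi t * x.2.2.2.1 t)
    - (∑ t, sc.alphaY t * (x.2.2.2.2 t : ℝ))

/-- The optimal welfare `φ* = sup_{x ∈ 𝓕} φ(x)`. -/
noncomputable def phiStar (sc : SupplyChain N P S D L T) : ℝ :=
  sSup (welfare sc '' Feasible sc)

/-- The sampled feasible set `𝓕̲(ℒ_a)`. -/
def SampledFeasible (sc : SupplyChain N P S D L T) (La : Set L) : Set (Alloc S D L T) :=
  { x ∈ Feasible sc | ∀ l, l ∉ La → x.2.2.1 l = 0 }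

/-- The sampled optimal welfare `φ̲*(ℒ_a)`. -/
noncomputable def phiLower (sc : SupplyChain N P S D L T) (La : Set L) : ℝ :=
  sSup (welfare sc '' SampledFeasible sc La)

/-- Graph-coarsening data: a partition map `c : 𝒩 → 𝒞` on nodes together with a
grouping of the global edges into classes indexed by `𝒦`. An edge `ℓ` is local if
`c(n_s(ℓ)) = c(n_r(ℓ))` and global otherwise; each class `k ∈ 𝒦` has a sending
partition `cs k`, a receiving partition `cr k` with `cs k ≠ cr k`, and a product
`pK k`, and consists of all global edges `ℓ` with `c(n_s(ℓ)) = cs k`,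
`c(n_r(ℓ)) = cr k` and `p(ℓ) = pK k`; every global edge lies in exactly one class. -/
structure Coarsening (sc : SupplyChain N P S D L T) (C K : Type) where
  /-- the partition map `c : 𝒩 → 𝒞` -/
  part : N → C
  /-- the sending partition `c_s(k)` of class `k` -/
  cs : K → C
  /-- the receiving partition `c_r(k)` of class `k` -/
  cr : K → C
  /-- the product `p(k)` of class `k` -/
  pK : K → P
  cs_ne_cr : ∀ k, cs k ≠ cr k
  unique_class : ∀ l : L, part (sc.nsend l) ≠ part (sc.nrecv l) →
    ∃! k : K, cs k = part (sc.nsend l) ∧ cr k = part (sc.nrecv l) ∧ pK k = sc.pL l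

variable {C K : Type} [Fintype K] [DecidableEq C]

/-- The set of edges in global-edge class `k`. -/
def classSet (sc : SupplyChain N P S D L T) (co : Coarsening sc C K) (k : K) : Finset L :=
  univ.filter (fun l =>
    co.part (sc.nsend l) = co.cs k ∧ co.part (sc.nrecv l) = co.cr k ∧ sc.pL l = co.pK k)

/-- The aggregated flow `f̂_k = Σ_{ℓ ∈ class k} f_ℓ`. -/
def aggFlow (sc : SupplyChain N P S D L T) (co : Coarsening sc C K) (f : L → ℝ) (k : K) : ℝ :=
  ∑ l ∈ classSet sc co k, f l

/-- The aggregated capacity `f̄̂_k = Σ_{ℓ ∈ class k} f̄_ℓ`. -/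
def aggCap (sc : SupplyChain N P S D L T) (co : Coarsening sc C K) (k : K) : ℝ :=
  ∑ l ∈ classSet sc co k, sc.fBar l

/-- The aggregated cost `α̂_k = min_{ℓ ∈ class k} α^f_ℓ` (as an infimum; for a
nonempty class this is the minimum transport cost over the class). -/
noncomputable def aggCost (sc : SupplyChain N P S D L T) (co : Coarsening sc C K) (k : K) : ℝ :=
  sInf (sc.alphaF '' (classSet sc co k : Set L))

/-- A coarse allocation `(s, d, g, ξ, y)` with one flow per global-edge class. -/
abbrev CoarseAlloc (S D K T : Type) : Type :=
  (S → ℝ) × (D → ℝ) × (K → ℝ) × (T → ℝ) × (T → ℤ)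

/-- The coarse feasible set `𝓕̄`. -/
def CoarseFeasible (sc : SupplyChain N P S D L T) (co : Coarsening sc C K) :
    Set (CoarseAlloc S D K T) :=
  { x | (∀ (c₀ : C) (p : P),
        (∑ i ∈ univ.filter (fun i => co.part (sc.nS i) = c₀ ∧ sc.pS i = p), x.1 i)
        + (∑ k ∈ univ.filter (fun k => co.cr k = c₀ ∧ co.pK k = p), x.2.2.1 k)
        - (∑ j ∈ univ.filter (fun j => co.part (sc.nD j) = c₀ ∧ sc.pD j = p), x.2.1 j)
        - (∑ k ∈ univ.filter (fun k => co.cs k = c₀ ∧ co.pK k = p), x.2.2.1 k)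
        + (∑ t ∈ univ.filter (fun t => co.part (sc.nT t) = c₀), sc.gamma t p * x.2.2.2.1 t) = 0)
      ∧ (∀ j, 0 ≤ x.2.1 j ∧ x.2.1 j ≤ sc.dBar j)
      ∧ (∀ i, 0 ≤ x.1 i ∧ x.1 i ≤ sc.sBar i)
      ∧ (∀ k, 0 ≤ x.2.2.1 k ∧ x.2.2.1 k ≤ aggCap sc co k)
      ∧ (∀ t, 0 ≤ x.2.2.2.2 t ∧ x.2.2.2.2 t ≤ (sc.yBar t : ℤ))
      ∧ (∀ t, 0 ≤ x.2.2.2.1 t ∧ x.2.2.2.1 t ≤ (x.2.2.2.2 t : ℝ) * sc.xiBar t) }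

/-- The coarse welfare `φ̄(s,d,g,ξ,y)`. -/
noncomputable def coarseWelfare (sc : SupplyChain N P S D L T) (co : Coarsening sc C K)
    (x : CoarseAlloc S D K T) : ℝ :=
  (∑ j, sc.alphaD j * x.2.1 j) - (∑ i, sc.alphaS i * x.1 i)
    - (∑ k, aggCost sc co k * x.2.2.1 k) - (∑ t, sc.alphaXi t * x.2.2.2.1 t)
    - (∑ t, sc.alphaY t * (x.2.2.2.2 t : ℝ))

/-- The coarse optimal welfare `φ̄*`. -/
noncomputable def phiUpper (sc : SupplyChain N P S D L T) (co : Coarsening sc C K) : ℝ :=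
  sSup (coarseWelfare sc co '' CoarseFeasible sc co)

/-!
Sum the nodal balances over the nodes of the part `c₀`. Supplies, demands and technology terms
regroup by part directly. A global edge lies in exactly one class, so the global flows into and
out of `c₀` add up to the aggregated flows; a local edge touching `c₀` both enters and leaves it,
so it cancels from inflow minus outflow.
-/

theorem Finset.sum_fiberwise_and_eq_sum_filter {ι κ γ M : Type*} [Fintype ι] [Fintype κ]
    [DecidableEq κ] [DecidableEq γ] [AddCommMonoid M] (g : ι → κ) (c : κ → γ) (c₀ : γ)
    (q : ι → Prop) [DecidablePred q] (w : ι → M) :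
    ∑ n with c n = c₀, ∑ i with g i = n ∧ q i, w i = ∑ i with c (g i) = c₀ ∧ q i, w i := by
  simp_rw [and_comm (b := q _), ← filter_filter, sum_fiberwise_eq_sum_filter, filter_filter,
    mem_filter, mem_univ, true_and]

section

variable {N P S D L T C K : Type} [Fintype L] [DecidableEq P] [DecidableEq C]
  (sc : SupplyChain N P S D L T) (co : Coarsening sc C K)

theorem classSet_pairwiseDisjoint : (Set.univ : Set K).PairwiseDisjoint (classSet sc co) := by
  intro k₁ _ k₂ _ hne
  refine Finset.disjoint_left.2 fun l h₁ h₂ => hne ?_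
  simp only [classSet, mem_filter, mem_univ, true_and] at h₁ h₂
  have hglobal : co.part (sc.nsend l) ≠ co.part (sc.nrecv l) := by
    rw [h₁.1, h₁.2.1]; exact co.cs_ne_cr k₁
  obtain ⟨h₁s, h₁r, h₁p⟩ := h₁
  obtain ⟨h₂s, h₂r, h₂p⟩ := h₂
  exact (co.unique_class l hglobal).unique ⟨h₁s.symm, h₁r.symm, h₁p.symm⟩
    ⟨h₂s.symm, h₂r.symm, h₂p.symm⟩

theorem sum_aggFlow_filter [Fintype K] (R : C → C → P → Prop) [∀ a b q, Decidable (R a b q)]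
    (f : L → ℝ) :
    ∑ k with R (co.cs k) (co.cr k) (co.pK k), aggFlow sc co f k
      = ∑ l with co.part (sc.nsend l) ≠ co.part (sc.nrecv l)
          ∧ R (co.part (sc.nsend l)) (co.part (sc.nrecv l)) (sc.pL l), f l := by
  classical
  have hclasses : (univ.filter fun k => R (co.cs k) (co.cr k) (co.pK k)).biUnion (classSet sc co)
      = univ.filter fun l => co.part (sc.nsend l) ≠ co.part (sc.nrecv l)
          ∧ R (co.part (sc.nsend l)) (co.part (sc.nrecv l)) (sc.pL l) := by
    ext l
    simp only [mem_biUnion, mem_filter, mem_univ, true_and, classSet]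
    constructor
    · rintro ⟨k, hR, hs, hr, hp⟩
      rw [hs, hr, hp]
      exact ⟨co.cs_ne_cr k, hR⟩
    · rintro ⟨hglobal, hR⟩
      obtain ⟨k, ⟨hs, hr, hp⟩, -⟩ := co.unique_class l hglobal
      exact ⟨k, by rwa [hs, hr, hp], hs.symm, hr.symm, hp.symm⟩
  rw [← hclasses, sum_biUnion ((classSet_pairwiseDisjoint sc co).subset (Set.subset_univ _))]
  rfl

theorem sum_filter_eq_sum_aggFlow_add_sum_local [Fintype K] (R : C → C → P → Prop)
    [∀ a b q, Decidable (R a b q)] (f : L → ℝ) :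
    ∑ l with R (co.part (sc.nsend l)) (co.part (sc.nrecv l)) (sc.pL l), f l
      = ∑ k with R (co.cs k) (co.cr k) (co.pK k), aggFlow sc co f k
        + ∑ l with co.part (sc.nsend l) = co.part (sc.nrecv l)
            ∧ R (co.part (sc.nsend l)) (co.part (sc.nrecv l)) (sc.pL l), f l := by
  rw [sum_aggFlow_filter, ← sum_filter_add_sum_filter_not _
    (fun l => co.part (sc.nsend l) ≠ co.part (sc.nrecv l)), filter_filter, filter_filter]
  simp only [not_not, and_comm]

theorem sum_recv_sub_sum_send_eq_sum_aggFlow [Fintype K] (f : L → ℝ) (c₀ : C) (p : P) :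
    ∑ l with co.part (sc.nrecv l) = c₀ ∧ sc.pL l = p, f l
      - ∑ l with co.part (sc.nsend l) = c₀ ∧ sc.pL l = p, f l
      = ∑ k with co.cr k = c₀ ∧ co.pK k = p, aggFlow sc co f k
        - ∑ k with co.cs k = c₀ ∧ co.pK k = p, aggFlow sc co f k := by
  have hrecv := sum_filter_eq_sum_aggFlow_add_sum_local sc co (fun _ b q => b = c₀ ∧ q = p) f
  have hsend := sum_filter_eq_sum_aggFlow_add_sum_local sc co (fun a _ q => a = c₀ ∧ q = p) f
  have hlocal : ∑ l with co.part (sc.nsend l) = co.part (sc.nrecv l)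
        ∧ co.part (sc.nrecv l) = c₀ ∧ sc.pL l = p, f l
      = ∑ l with co.part (sc.nsend l) = co.part (sc.nrecv l)
        ∧ co.part (sc.nsend l) = c₀ ∧ sc.pL l = p, f l :=
    sum_congr (filter_congr fun l _ => and_congr_right fun h => by rw [h]) fun _ _ => rfl
  linarith

end

theorem aggregated_balance_of_nodal_balance_general (sc : SupplyChain N P S D L T)
    (co : Coarsening sc C K)
    (s : S → ℝ) (d : D → ℝ) (f : L → ℝ) (xi : T → ℝ)
    (hbal : ∀ (n : N) (p : P),
      (∑ i ∈ univ.filter (fun i => sc.nS i = n ∧ sc.pS i = p), s i)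
      + (∑ l ∈ univ.filter (fun l => sc.nrecv l = n ∧ sc.pL l = p), f l)
      - (∑ j ∈ univ.filter (fun j => sc.nD j = n ∧ sc.pD j = p), d j)
      - (∑ l ∈ univ.filter (fun l => sc.nsend l = n ∧ sc.pL l = p), f l)
      + (∑ t ∈ univ.filter (fun t => sc.nT t = n), sc.gamma t p * xi t) = 0) :
    ∀ (c₀ : C) (p : P),
      (∑ i ∈ univ.filter (fun i => co.part (sc.nS i) = c₀ ∧ sc.pS i = p), s i)
      + (∑ k ∈ univ.filter (fun k => co.cr k = c₀ ∧ co.pK k = p), aggFlow sc co f k)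
      - (∑ j ∈ univ.filter (fun j => co.part (sc.nD j) = c₀ ∧ sc.pD j = p), d j)
      - (∑ k ∈ univ.filter (fun k => co.cs k = c₀ ∧ co.pK k = p), aggFlow sc co f k)
      + (∑ t ∈ univ.filter (fun t => co.part (sc.nT t) = c₀), sc.gamma t p * xi t) = 0 := by
  intro c₀ p
  have hpart : ∑ n with co.part n = c₀,
      ((∑ i with sc.nS i = n ∧ sc.pS i = p, s i)
        + (∑ l with sc.nrecv l = n ∧ sc.pL l = p, f l)
        - (∑ j with sc.nD j = n ∧ sc.pD j = p, d j)
        - (∑ l with sc.nsend l = n ∧ sc.pL l = p, f l)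
        + (∑ t with sc.nT t = n, sc.gamma t p * xi t)) = 0 :=
    sum_eq_zero fun n _ => hbal n p
  simp only [sum_add_distrib, sum_sub_distrib, sum_fiberwise_and_eq_sum_filter,
    sum_fiberwise_eq_sum_filter, mem_filter, mem_univ, true_and] at hpart
  linarith [sum_recv_sub_sum_send_eq_sum_aggFlow sc co f c₀ p]

/-- Aggregated balance constraints are implied by the nodal balances:
if an allocation `(s,d,f,ξ,y)` satisfies the nodal balance at every node and product,
then for every partition `c₀` and product `p` the aggregated balance holds with the
aggregated flows `f̂_k = Σ_{ℓ ∈ class k} f_ℓ`. -/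
theorem aggregated_balance_of_nodal_balance (sc : SupplyChain N P S D L T)
    (co : Coarsening sc C K)
    (s : S → ℝ) (d : D → ℝ) (f : L → ℝ) (xi : T → ℝ) (y : T → ℤ)
    (hbal : ∀ (n : N) (p : P),
      (∑ i ∈ univ.filter (fun i => sc.nS i = n ∧ sc.pS i = p), s i)
      + (∑ l ∈ univ.filter (fun l => sc.nrecv l = n ∧ sc.pL l = p), f l)
      - (∑ j ∈ univ.filter (fun j => sc.nD j = n ∧ sc.pD j = p), d j)
      - (∑ l ∈ univ.filter (fun l => sc.nsend l = n ∧ sc.pL l = p), f l)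
      + (∑ t ∈ univ.filter (fun t => sc.nT t = n), sc.gamma t p * xi t) = 0) :
    ∀ (c₀ : C) (p : P),
      (∑ i ∈ univ.filter (fun i => co.part (sc.nS i) = c₀ ∧ sc.pS i = p), s i)
      + (∑ k ∈ univ.filter (fun k => co.cr k = c₀ ∧ co.pK k = p), aggFlow sc co f k)
      - (∑ j ∈ univ.filter (fun j => co.part (sc.nD j) = c₀ ∧ sc.pD j = p), d j)
      - (∑ k ∈ univ.filter (fun k => co.cs k = c₀ ∧ co.pK k = p), aggFlow sc co f k)
      + (∑ t ∈ univ.filter (fun t => co.part (sc.nT t) = c₀), sc.gamma t p * xi t) = 0 :=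
  aggregated_balance_of_nodal_balance_general sc co s d f xi hbal
end

section
/- The coarsened model is a relaxation of the original model: for every feasible allocation (s,d,f,ξ,y) ∈ 𝓕 of the original supply chain model, the aggregated tuple (s,d,f̂,ξ,y), where f̂_k = Σ_{ℓ ∈ class k} f_ℓ for each global-edge class k ∈ 𝒦, belongs to the coarse feasible set 𝓕̄. -/
open Finset

variable {N P S D L T : Type} [Fintype N] [Fintype P] [Fintype S] [Fintype D]
  [Fintype L] [Fintype T] [DecidableEq N] [DecidableEq P]

variable {C K : Type} [Fintype K] [DecidableEq C]

/-!
Summing the node balances over the nodes of a partition yields the partition balance, except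
that the flows still appear edge by edge. An edge with both endpoints in the partition enters
both the inflow and the outflow and cancels; every remaining edge is global and lies in exactly
one class, so those flows regroup into the aggregated class flows. The capacity bounds of the
aggregated flows are the edge bounds summed over each class.
-/

theorem Finset.sum_fiberwise_filter_eq_sum_filter_comp {ι κ γ M : Type*} [Fintype ι]
    [Fintype κ] [DecidableEq κ] [DecidableEq γ] [AddCommMonoid M] (g : ι → κ) (q : ι → Prop)
    [DecidablePred q] (π : κ → γ) (c : γ) (h : ι → M) :
    ∑ n with π n = c, ∑ i with g i = n ∧ q i, h i = ∑ i with π (g i) = c ∧ q i, h i := by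
  have := sum_fiberwise_eq_sum_filter {i | q i} {n | π n = c} g h
  simp only [filter_filter, mem_filter, mem_univ, true_and] at this
  simpa only [and_comm] using this

theorem Finset.sum_filter_target_sub_sum_filter_source_eq_crossing {α β M : Type*} [Fintype α]
    [DecidableEq β] [AddCommGroup M] (src tgt : α → β) (q : α → Prop) [DecidablePred q]
    (c : β) (f : α → M) :
    ∑ l with tgt l = c ∧ q l, f l - ∑ l with src l = c ∧ q l, f l
      = ∑ l with src l ≠ tgt l ∧ tgt l = c ∧ q l, f l
        - ∑ l with src l ≠ tgt l ∧ src l = c ∧ q l, f l := by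
  simp only [sum_filter, ← sum_sub_distrib]
  refine sum_congr rfl fun l _ => ?_
  by_cases h : src l = tgt l <;> simp [h]

namespace Coarsening

variable {N P S D L T C K : Type} [Fintype L] [DecidableEq P] [DecidableEq C]
  {sc : SupplyChain N P S D L T} (co : Coarsening sc C K)

theorem mem_classSet {k : K} {l : L} :
    l ∈ classSet sc co k ↔
      co.part (sc.nsend l) = co.cs k ∧ co.part (sc.nrecv l) = co.cr k ∧ sc.pL l = co.pK k := by
  simp [classSet]

theorem classSet_pairwiseDisjoint (s : Set K) : s.PairwiseDisjoint (classSet sc co) := by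
  intro k _ k' _ hne
  refine disjoint_left.mpr fun l hl hl' => hne ?_
  obtain ⟨hs, hr, hp⟩ := co.mem_classSet.mp hl
  obtain ⟨hs', hr', hp'⟩ := co.mem_classSet.mp hl'
  have hglobal : co.part (sc.nsend l) ≠ co.part (sc.nrecv l) := hs ▸ hr ▸ co.cs_ne_cr k
  exact (co.unique_class l hglobal).unique ⟨hs.symm, hr.symm, hp.symm⟩
    ⟨hs'.symm, hr'.symm, hp'.symm⟩

theorem biUnion_classSet_filter [Fintype K] [DecidableEq L] (R : C → C → P → Prop)
    [∀ a b q, Decidable (R a b q)] :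
    (univ.filter fun k => R (co.cs k) (co.cr k) (co.pK k)).biUnion (classSet sc co)
      = univ.filter fun l => co.part (sc.nsend l) ≠ co.part (sc.nrecv l) ∧
          R (co.part (sc.nsend l)) (co.part (sc.nrecv l)) (sc.pL l) := by
  ext l
  simp only [mem_biUnion, mem_filter, mem_univ, true_and, co.mem_classSet]
  constructor
  · rintro ⟨k, hR, hs, hr, hp⟩
    exact ⟨hs ▸ hr ▸ co.cs_ne_cr k, hs ▸ hr ▸ hp ▸ hR⟩
  · rintro ⟨hglobal, hR⟩
    obtain ⟨k, ⟨hs, hr, hp⟩, -⟩ := co.unique_class l hglobal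
    exact ⟨k, hs ▸ hr ▸ hp ▸ hR, hs.symm, hr.symm, hp.symm⟩

theorem sum_aggFlow_filter [Fintype K] (R : C → C → P → Prop) [∀ a b q, Decidable (R a b q)]
    (f : L → ℝ) :
    ∑ k with R (co.cs k) (co.cr k) (co.pK k), aggFlow sc co f k
      = ∑ l with co.part (sc.nsend l) ≠ co.part (sc.nrecv l) ∧
          R (co.part (sc.nsend l)) (co.part (sc.nrecv l)) (sc.pL l), f l := by
  classical
  rw [← co.biUnion_classSet_filter, sum_biUnion (co.classSet_pairwiseDisjoint _)]
  rfl

theorem sum_inflow_sub_sum_outflow [Fintype K] (f : L → ℝ) (c₀ : C) (p : P) :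
    ∑ l with co.part (sc.nrecv l) = c₀ ∧ sc.pL l = p, f l
      - ∑ l with co.part (sc.nsend l) = c₀ ∧ sc.pL l = p, f l
      = ∑ k with co.cr k = c₀ ∧ co.pK k = p, aggFlow sc co f k
        - ∑ k with co.cs k = c₀ ∧ co.pK k = p, aggFlow sc co f k := by
  rw [co.sum_aggFlow_filter (fun _ r q => r = c₀ ∧ q = p),
    co.sum_aggFlow_filter (fun s _ q => s = c₀ ∧ q = p)]
  exact sum_filter_target_sub_sum_filter_source_eq_crossing (fun l => co.part (sc.nsend l))
    (fun l => co.part (sc.nrecv l)) (fun l => sc.pL l = p) c₀ f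

theorem aggFlow_nonneg {f : L → ℝ} (hf : ∀ l, 0 ≤ f l) (k : K) : 0 ≤ aggFlow sc co f k :=
  sum_nonneg fun l _ => hf l

theorem aggFlow_le_aggCap {f : L → ℝ} (hf : ∀ l, f l ≤ sc.fBar l) (k : K) :
    aggFlow sc co f k ≤ aggCap sc co k :=
  sum_le_sum fun l _ => hf l

end Coarsening

/-- The coarsened model is a relaxation of the original model: for every
feasible allocation `(s,d,f,ξ,y) ∈ 𝓕`, the aggregated tuple `(s,d,f̂,ξ,y)` with
`f̂_k = Σ_{ℓ ∈ class k} f_ℓ` belongs to the coarse feasible set `𝓕̄`. -/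
theorem coarse_relaxation (sc : SupplyChain N P S D L T) (co : Coarsening sc C K)
    (x : Alloc S D L T) (hx : x ∈ Feasible sc) :
    (x.1, x.2.1, aggFlow sc co x.2.2.1, x.2.2.2.1, x.2.2.2.2) ∈ CoarseFeasible sc co := by
  obtain ⟨hbal, hd, hs, hf, hy, hxi⟩ := hx
  refine ⟨fun c₀ p => ?_, hd, hs, fun k => ⟨co.aggFlow_nonneg (fun l => (hf l).1) k,
    co.aggFlow_le_aggCap (fun l => (hf l).2) k⟩, hy, hxi⟩
  have hsum := sum_eq_zero (s := {n | co.part n = c₀}) fun n _ => hbal n p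
  simp only [sum_add_distrib, sum_sub_distrib, sum_fiberwise_filter_eq_sum_filter_comp,
    sum_fiberwise_eq_sum_filter, mem_filter, mem_univ, true_and] at hsum
  linarith [co.sum_inflow_sub_sum_outflow x.2.2.1 c₀ p]
end
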